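/- With the construction below, the intersection graph IG[P̃] of the modified instance P̃ is a forest, i.e., contains no cycle. (Claim 6.1.) -/

import Mathlib

noncomputable section
open scoped Classical

/-- A point in the Euclidean plane. -/
abbrev Point : Type := ℝ × ℝ

/-- The Manhattan distance `d(p, q)`. -/
def manh (p q : Point) : ℝ := |p.1 - q.1| + |p.2 - q.2|

/-- The Euclidean length `‖pq‖` of the segment between `p` and `q`. -/
def euclen (p q : Point) : ℝ := Real.sqrt ((p.1 - q.1) ^ 2 + (p.2 - q.2) ^ 2)

/-- The segment `pq` is axis-aligned. -/
def axisAligned (p q : Point) : Prop := p.1 = q.1 ∨ p.2 = q.2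

/-- `z` lies in the bounding box `B(a, b)` (componentwise between `a ⊓ b` and `a ⊔ b`). -/
def inBox (a b z : Point) : Prop := a ⊓ b ≤ z ∧ z ≤ a ⊔ b

lemma euclen_comm (p q : Point) : euclen p q = euclen q p := by
  unfold euclen; ring_nf

/-- Length of an (unordered) edge. -/
def sym2Len : Sym2 Point → ℝ := Sym2.lift ⟨euclen, euclen_comm⟩

/-- The length of a network, given by its (finite) edge set. -/
def netLength (N : Finset (Sym2 Point)) : ℝ := ∑ e ∈ N, sym2Len e

/-- A (simple) path in the plane, given by its sequence of (distinct) vertices. -/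
structure GPath where
  k : ℕ
  pts : Fin (k + 1) → Point
  inj : Function.Injective pts

/-- The `i`-th edge of a path. -/
def GPath.edge (π : GPath) (i : Fin π.k) : Sym2 Point :=
  s(π.pts i.castSucc, π.pts i.succ)

/-- The edge set of a path. -/
def GPath.edges (π : GPath) : Finset (Sym2 Point) :=
  Finset.image π.edge Finset.univ

/-- The total (Euclidean) length of a path. -/
def GPath.length (π : GPath) : ℝ :=
  ∑ i : Fin π.k, euclen (π.pts i.castSucc) (π.pts i.succ)

/-- `π` is a Manhattan path (M-path) for the pair `(s, t)`: an `s`–`t` path all of whose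
edges are axis-aligned and whose total length equals the Manhattan distance `d(s, t)`. -/
def IsMPath (s t : Point) (π : GPath) : Prop :=
  π.pts 0 = s ∧ π.pts (Fin.last π.k) = t ∧
  (∀ i : Fin π.k, axisAligned (π.pts i.castSucc) (π.pts i.succ)) ∧
  π.length = manh s t

/-- A GMMN instance: a finite set of pairs of points. -/
abbrev Inst : Type := Finset (Point × Point)

/-- The vertex set of the Hanan grid `H(P)`. -/
def hananV (P : Inst) : Finset Point :=
  ((P.image fun v => v.1.1) ∪ (P.image fun v => v.2.1)) ×ˢ
  ((P.image fun v => v.1.2) ∪ (P.image fun v => v.2.2))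

/-- `{p, q}` is an edge of the Hanan grid `H(P)`: an axis-aligned segment between two distinct
grid vertices containing no third grid vertex. -/
def IsHananEdge (P : Inst) (p q : Point) : Prop :=
  p ∈ hananV P ∧ q ∈ hananV P ∧ p ≠ q ∧ axisAligned p q ∧
  ∀ z ∈ hananV P, inBox p q z → z = p ∨ z = q

/-- All edges of the path `π` are edges of the Hanan grid `H(P)`. -/
def OnGrid (P : Inst) (π : GPath) : Prop :=
  ∀ i : Fin π.k, IsHananEdge P (π.pts i.castSucc) (π.pts i.succ)

/-- `π ∈ Π_P(u)`: an M-path for the pair `u` that is a subgraph of the Hanan grid `H(P)`. -/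
def InPi (P : Inst) (u : Point × Point) (π : GPath) : Prop :=
  IsMPath u.1 u.2 π ∧ OnGrid P π

/-- The network `∪_{v ∈ P} π_v` determined by a choice of M-paths. -/
def netOf (P : Inst) (f : Point × Point → GPath) : Finset (Sym2 Point) :=
  P.biUnion fun v => (f v).edges

/-- `f` gives a feasible solution in `Feas(P)`: an M-path on the Hanan grid for each pair. -/
def IsFeasChoice (P : Inst) (f : Point × Point → GPath) : Prop :=
  ∀ v ∈ P, InPi P v (f v)

/-- `f` gives an optimal solution in `Opt(P)`. -/
def IsOptChoice (P : Inst) (f : Point × Point → GPath) : Prop :=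
  IsFeasChoice P f ∧
  ∀ g : Point × Point → GPath, IsFeasChoice P g →
    netLength (netOf P f) ≤ netLength (netOf P g)

/-- Adjacency in the intersection graph `IG[P]`: `u ≠ v` and the induced subgrids
`H(P, u)` and `H(P, v)` share an edge. -/
def IGAdj (P : Inst) (u v : Point × Point) : Prop :=
  u ≠ v ∧ ∃ p q : Point, IsHananEdge P p q ∧
    inBox u.1 u.2 p ∧ inBox u.1 u.2 q ∧ inBox v.1 v.2 p ∧ inBox v.1 v.2 q

/-- The total length `‖π₁ ∩ π₂‖` of the segments shared by two paths. -/
def sharedLen (π₁ π₂ : GPath) : ℝ := netLength (π₁.edges ∩ π₂.edges)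

/-- A pair `(p, q)` with `p_x ≤ q_x` is regular if `p_y ≤ q_y`. -/
def Regular (u : Point × Point) : Prop := u.1.1 ≤ u.2.1 ∧ u.1.2 ≤ u.2.2

/-- A pair `(p, q)` with `p_x ≤ q_x` is flipped if `p_y ≥ q_y`. -/
def Flipped (u : Point × Point) : Prop := u.1.1 ≤ u.2.1 ∧ u.2.2 ≤ u.1.2

/-- The intersection graph `IG[P]` as a simple graph on the pairs of `P`. -/
def IG (P : Inst) : SimpleGraph {v : Point × Point // v ∈ P} where
  Adj u v := IGAdj P u.1 v.1
  symm := by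
    refine ⟨?_⟩
    rintro u v ⟨hne, p, q, he, h1, h2, h3, h4⟩
    exact ⟨hne.symm, p, q, he, h3, h4, h1, h2⟩
  loopless := ⟨fun u h => h.1 rfl⟩


/-- A pair is degenerate if its two terminals share a coordinate. -/
def Degenerate (u : Point × Point) : Prop := u.1.1 = u.2.1 ∨ u.1.2 = u.2.2


/-!
The intersection graph `IG[P]` is connected with as many edges as vertices, so deleting an edge
of its cycle leaves a tree. Hence `IG[P \ {v}]` is a forest in which `u₁, u₂` are the only two
neighbours of `v` joined by a path. The four new boxes lie in `B(v)` and pairwise meet in at most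
a point, so the new pairs are pairwise non-adjacent and every neighbour of a new pair is a
neighbour of `v`. Adding a vertex to a forest keeps it a forest as long as its neighbours lie in
distinct components, and this is checked for the new pairs one at a time: `(q⁻, q)` and `(q, q⁺)`
span a single Hanan edge, so two of their neighbours would be adjacent and close a triangle with
`v`; `(s_v, q⁻)` misses `B(u₂)`; `(q⁺, t_v)` misses `B(u₁)` or `B(u₂)`, and two neighbours of it
joined through `(s_v, q⁻)` would again give a triangle with `v`, using the edge `q q⁺` or `q⁻ q`.
-/

namespace SimpleGraph

variable {V : Type*} {G : SimpleGraph V}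

theorem Walk.IsCycle.exists_walk_between_neighbors {x : V} {c : G.Walk x x} (hc : c.IsCycle) :
    ∃ a b, a ≠ b ∧ G.Adj x a ∧ G.Adj x b ∧
      ∃ r : G.Walk a b, x ∉ r.support ∧ r.support ⊆ c.support := by
  cases c with
  | nil => exact absurd hc Walk.not_isCycle_nil
  | @cons _ a _ h p =>
    have hp : ¬ p.Nil := Walk.not_nil_of_isCycle_cons hc
    have hne := hc.snd_ne_penultimate
    rw [Walk.snd_cons, Walk.penultimate_cons_of_not_nil _ _ hp] at hne
    refine ⟨a, p.penultimate, hne, h, (p.adj_penultimate hp).symm, p.dropLast, ?_, ?_⟩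
    · have hnd := ((Walk.cons_isCycle_iff p h).1 hc).1.support_nodup
      rw [← p.dropLast_support_concat, List.nodup_append] at hnd
      rw [Walk.support_dropLast hp]
      exact fun hx => hnd.2.2 x hx x (List.mem_singleton_self x) rfl
    · rw [Walk.support_dropLast hp, Walk.support_cons]
      exact fun y hy => List.mem_cons_of_mem _ (List.dropLast_subset _ hy)

theorem IsAcyclic.eq_of_reachable_deleteIncidenceSet (hG : G.IsAcyclic) {x a b : V}
    (ha : G.Adj x a) (hb : G.Adj x b) (hab : (G.deleteIncidenceSet x).Reachable b a) : a = b := by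
  classical
  obtain ⟨r, hr⟩ := hab.exists_isPath
  have hx : x ∉ r.support := by
    intro hx
    cases (r.takeUntil x hx).reverse with
    | nil => exact hb.ne rfl
    | cons h _ => exact (deleteIncidenceSet_adj.1 h).2.1 rfl
  have hp : (Walk.cons hb (r.mapLe (G.deleteIncidenceSet_le x))).IsPath :=
    (hr.mapLe _).cons (by rwa [Walk.support_mapLe_eq_support])
  simpa using hG.eq_snd_of_adj_start hp ha (Walk.end_mem_support _)

theorem isAcyclic_induce_insert {s : Set V} {x : V} (hs : (G.induce s).IsAcyclic)
    (hx : ∀ a b : s, G.Adj x a → G.Adj x b → (G.induce s).Reachable a b → a = b) :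
    (G.induce (insert x s)).IsAcyclic := by
  classical
  intro y c hc
  let ι := (Embedding.induce (G := G) (insert x s)).toHom
  by_cases hxc : ⟨x, Set.mem_insert x s⟩ ∈ c.support
  · obtain ⟨a, b, hab, ha, hb, r, hxr, hrc⟩ :=
      ((hc.rotate hxc).map Subtype.val_injective (f := ι)).exists_walk_between_neighbors
    change x ∉ r.support at hxr
    have hrs : ∀ z ∈ r.support, z ∈ s := by
      intro z hz
      obtain ⟨z', -, rfl⟩ := List.mem_map.1 (Walk.support_map ι _ ▸ hrc hz)
      exact z'.2.resolve_left fun h => hxr (h ▸ hz)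
    exact hab (congrArg Subtype.val (hx ⟨a, hrs a r.start_mem_support⟩
      ⟨b, hrs b r.end_mem_support⟩ ha hb ⟨r.induce s hrs⟩))
  · have hcs : ∀ z ∈ (c.map ι).support, z ∈ s := by
      intro z hz
      obtain ⟨z', hz', rfl⟩ := List.mem_map.1 (Walk.support_map ι c ▸ hz)
      refine z'.2.resolve_left fun h => hxc ?_
      rwa [show z' = ⟨x, Set.mem_insert x s⟩ from Subtype.ext h] at hz'
    refine hs ((c.map ι).induce s hcs) (Walk.IsCycle.of_map (f := (Embedding.induce s).toHom) ?_)
    rw [Walk.map_induce]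
    exact hc.map Subtype.val_injective

theorem reachable_or_of_reachable_induce_insert {s : Set V} {x a b : V} (ha : a ∈ s) (hb : b ∈ s)
    (h : (G.induce (insert x s)).Reachable ⟨a, .inr ha⟩ ⟨b, .inr hb⟩) :
    (G.induce s).Reachable ⟨a, ha⟩ ⟨b, hb⟩ ∨ ∃ c d : s, G.Adj x c ∧ G.Adj x d ∧
      (G.induce s).Reachable ⟨a, ha⟩ c ∧ (G.induce s).Reachable d ⟨b, hb⟩ := by
  obtain ⟨p⟩ := h
  suffices key : ∀ (y z : ↥(insert x s)) (_ : (G.induce (insert x s)).Walk y z), z.1 = b →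
      (∀ hy : y.1 ∈ s, (G.induce s).Reachable ⟨y, hy⟩ ⟨b, hb⟩ ∨ ∃ c d : s, G.Adj x c ∧
        G.Adj x d ∧ (G.induce s).Reachable ⟨y, hy⟩ c ∧ (G.induce s).Reachable d ⟨b, hb⟩) ∧
      (y.1 ∉ s → ∃ d : s, G.Adj y d ∧ (G.induce s).Reachable d ⟨b, hb⟩) from
    (key _ _ p rfl).1 ha
  intro y z p hz
  induction p with
  | nil =>
    subst hz
    exact ⟨fun _ => .inl .rfl, fun hy => absurd hb hy⟩
  | @cons y w z hyw p ih =>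
    obtain ⟨ih₁, ih₂⟩ := ih hz
    refine ⟨fun hy => ?_, fun hy => ?_⟩
    · by_cases hw : w.1 ∈ s
      · have hr : (G.induce s).Reachable ⟨y, hy⟩ ⟨w, hw⟩ := Adj.reachable hyw
        rcases ih₁ hw with h | ⟨c, d, hc, hd, h₁, h₂⟩
        · exact .inl (hr.trans h)
        · exact .inr ⟨c, d, hc, hd, hr.trans h₁, h₂⟩
      · obtain ⟨d, hd, hdb⟩ := ih₂ hw
        have hwx : w.1 = x := w.2.resolve_right hw
        exact .inr ⟨⟨y, hy⟩, d, (congrArg (G.Adj · y) hwx).mp hyw.symm,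
          (congrArg (G.Adj · d) hwx).mp hd, .rfl, hdb⟩
    · have hyx : y.1 = x := y.2.resolve_right hy
      have hw : w.1 ∈ s := w.2.resolve_left fun h => hyw.ne (Subtype.ext (hyx.trans h.symm))
      rcases ih₁ hw with h | ⟨c, d, hc, hd, h₁, h₂⟩
      · exact ⟨⟨w, hw⟩, hyw, h⟩
      · exact ⟨d, (congrArg (G.Adj · d) hyx).mpr hd, h₂⟩

theorem deleteIncidenceSet_le_deleteEdges {x u : V} :
    G.deleteIncidenceSet x ≤ G.deleteEdges {s(x, u)} := fun a b h => by
  rw [deleteIncidenceSet_adj] at h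
  exact deleteEdges_adj.2 ⟨h.1, by simp [h.2.1, h.2.2]⟩

theorem isAcyclic_deleteEdges_of_reachable [Finite V] (hconn : G.Connected)
    (hcard : G.edgeSet.ncard = Nat.card V) {x y : V} (hxy : G.Adj x y)
    (h : (G.deleteEdges {s(x, y)}).Reachable x y) : (G.deleteEdges {s(x, y)}).IsAcyclic := by
  refine (isTree_iff_connected_and_card.2 ⟨hconn.connected_delete_edge_of_not_isBridge
    (by rwa [isBridge_iff, not_not]), ?_⟩).isAcyclic
  rw [Nat.card_coe_set_eq, edgeSet_deleteEdges,
    Set.ncard_sdiff_singleton_add_one (G.mem_edgeSet.2 hxy) (Set.toFinite _), hcard]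

theorem isAcyclic_deleteEdges_of_reachable_deleteIncidenceSet [Finite V] (hconn : G.Connected)
    (hcard : G.edgeSet.ncard = Nat.card V) {x u w : V} (hu : G.Adj x u) (hw : G.Adj x w)
    (huw : u ≠ w) (h : (G.deleteIncidenceSet x).Reachable w u) :
    (G.deleteEdges {s(x, u)}).IsAcyclic :=
  isAcyclic_deleteEdges_of_reachable hconn hcard hu <|
    (Adj.reachable (deleteEdges_adj.2 ⟨hw, by simp [huw.symm, hu.ne]⟩)).trans
      (h.mono deleteIncidenceSet_le_deleteEdges)

theorem isAcyclic_deleteIncidenceSet_of_reachable [Finite V] (hconn : G.Connected)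
    (hcard : G.edgeSet.ncard = Nat.card V) {x u w : V} (hu : G.Adj x u) (hw : G.Adj x w)
    (huw : u ≠ w) (h : (G.deleteIncidenceSet x).Reachable u w) :
    (G.deleteIncidenceSet x).IsAcyclic :=
  (isAcyclic_deleteEdges_of_reachable_deleteIncidenceSet hconn hcard hu hw huw h.symm).anti
    deleteIncidenceSet_le_deleteEdges

theorem eq_or_eq_of_reachable_deleteIncidenceSet [Finite V] (hconn : G.Connected)
    (hcard : G.edgeSet.ncard = Nat.card V) {x u w a b : V} (hu : G.Adj x u) (hw : G.Adj x w)
    (huw : u ≠ w) (hcyc : (G.deleteIncidenceSet x).Reachable w u) (ha : G.Adj x a)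
    (hb : G.Adj x b) (hab : a ≠ b) (h : (G.deleteIncidenceSet x).Reachable a b) :
    u = a ∨ u = b := by
  by_contra! hne
  have hT := isAcyclic_deleteEdges_of_reachable_deleteIncidenceSet hconn hcard hu hw huw hcyc
  have hle : G.deleteIncidenceSet x ≤ (G.deleteEdges {s(x, u)}).deleteIncidenceSet x :=
    fun c d h => deleteIncidenceSet_adj.2
      ⟨deleteIncidenceSet_le_deleteEdges h, (deleteIncidenceSet_adj.1 h).2⟩
  exact hab (hT.eq_of_reachable_deleteIncidenceSet
    (deleteEdges_adj.2 ⟨ha, by simp [hne.1.symm, hu.ne]⟩)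
    (deleteEdges_adj.2 ⟨hb, by simp [hne.2.symm, hu.ne]⟩) (h.symm.mono hle))

theorem eq_or_sym2_eq_of_reachable_deleteIncidenceSet [Finite V] (hconn : G.Connected)
    (hcard : G.edgeSet.ncard = Nat.card V) {x u₁ u₂ a b : V} (h₁ : G.Adj x u₁)
    (h₂ : G.Adj x u₂) (hne : u₁ ≠ u₂) (hcyc : (G.deleteIncidenceSet x).Reachable u₁ u₂)
    (ha : G.Adj x a) (hb : G.Adj x b) (h : (G.deleteIncidenceSet x).Reachable a b) :
    a = b ∨ s(a, b) = s(u₁, u₂) := by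
  by_cases hab : a = b
  · exact .inl hab
  have e₁ := eq_or_eq_of_reachable_deleteIncidenceSet hconn hcard h₁ h₂ hne hcyc.symm ha hb hab h
  have e₂ := eq_or_eq_of_reachable_deleteIncidenceSet hconn hcard h₂ h₁ hne.symm hcyc ha hb hab h
  right
  rcases e₁ with rfl | rfl <;> rcases e₂ with rfl | rfl <;> simp_all [Sym2.eq_swap]

/-- In the application `x = (s_v, q⁻)` and `y = (q⁺, t_v)`. -/
theorem isAcyclic_induce_insert_insert {O : Set V} {v u₁ u₂ x y : V}
    (hO : (G.induce O).IsAcyclic)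
    (hcyc : ∀ a b : O, G.Adj v a → G.Adj v b → (G.induce O).Reachable a b →
      a = b ∨ s(a.1, b.1) = s(u₁, u₂))
    (hxv : ∀ a ∈ O, G.Adj x a → G.Adj v a) (hyv : ∀ a ∈ O, G.Adj y a → G.Adj v a)
    (hxy : ¬ G.Adj x y) (hxu₂ : ¬ G.Adj x u₂) (hyu : ¬ G.Adj y u₁ ∨ ¬ G.Adj y u₂)
    (hcommon : ∀ a ∈ O, ∀ b ∈ O, G.Adj x a → G.Adj y a → G.Adj x b → G.Adj y b → a = b)
    (hcommon₁ : G.Adj x u₁ → ∀ a ∈ O, G.Adj x a → G.Adj y a → a = u₁) :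
    (G.induce (insert y (insert x O))).IsAcyclic := by
  have key : ∀ a (ha : a ∈ O) (c : O), G.Adj y a → G.Adj x c →
      (G.induce O).Reachable ⟨a, ha⟩ c → a = c ∨ (a = u₂ ∧ c.1 = u₁) := by
    intro a ha' c ha hc h
    rcases hcyc ⟨a, ha'⟩ c (hyv a ha' ha) (hxv c c.2 hc) h with e | e
    · exact .inl (congrArg Subtype.val e)
    · rcases Sym2.eq_iff.1 e with ⟨-, e₂⟩ | ⟨e₁, e₂⟩
      · exact absurd (e₂ ▸ hc) hxu₂
      · exact .inr ⟨e₁, e₂⟩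
  have hxO : (G.induce (insert x O)).IsAcyclic := by
    refine isAcyclic_induce_insert hO fun a b ha hb h => ?_
    refine (hcyc a b (hxv a a.2 ha) (hxv b b.2 hb) h).resolve_right fun e => ?_
    rcases Sym2.eq_iff.1 e with ⟨-, e₂⟩ | ⟨e₁, -⟩
    · exact hxu₂ (e₂ ▸ hb)
    · exact hxu₂ (e₁ ▸ ha)
  refine isAcyclic_induce_insert hxO fun ⟨a, ha'⟩ ⟨b, hb'⟩ ha hb h => Subtype.ext ?_
  change G.Adj y a at ha
  change G.Adj y b at hb
  change a = b
  have haO : a ∈ O := ha'.resolve_left fun e => hxy (e ▸ ha).symm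
  have hbO : b ∈ O := hb'.resolve_left fun e => hxy (e ▸ hb).symm
  have hyu' : ∀ {a b}, G.Adj y a → G.Adj y b → ¬ (a = u₁ ∧ b = u₂) := fun ha hb ⟨e₁, e₂⟩ =>
    hyu.elim (· (e₁ ▸ ha)) (· (e₂ ▸ hb))
  rcases reachable_or_of_reachable_induce_insert haO hbO h with h | ⟨c, d, hc, hd, hac, hdb⟩
  · rcases hcyc ⟨a, haO⟩ ⟨b, hbO⟩ (hyv a haO ha) (hyv b hbO hb) h with e | e
    · exact congrArg Subtype.val e
    · rcases Sym2.eq_iff.1 e with ⟨e₁, e₂⟩ | ⟨e₁, e₂⟩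
      · exact absurd ⟨e₁, e₂⟩ (hyu' ha hb)
      · exact absurd ⟨e₂, e₁⟩ (hyu' hb ha)
  rcases key a haO c ha hc hac with e₁ | ⟨e₁, f₁⟩ <;>
    rcases key b hbO d hb hd hdb.symm with e₂ | ⟨e₂, f₂⟩
  · exact hcommon a haO b hbO (e₁ ▸ hc) ha (e₂ ▸ hd) hb
  · exact absurd ⟨hcommon₁ (f₂ ▸ hd) a haO (e₁ ▸ hc) ha, e₂⟩ (hyu' ha hb)
  · exact absurd ⟨hcommon₁ (f₁ ▸ hc) b hbO (e₂ ▸ hd) hb, e₁⟩ (hyu' hb ha)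
  · exact e₁.trans e₂.symm

end SimpleGraph

open SimpleGraph

lemma inBox_iff_of_le {a b : Point} (h : a ≤ b) (z : Point) : inBox a b z ↔ a ≤ z ∧ z ≤ b := by
  rw [inBox, inf_eq_left.2 h, sup_eq_right.2 h]

lemma inBox_sup (a b : Point) : inBox a b (a ⊔ b) := ⟨inf_le_sup, le_rfl⟩

lemma inBox_of_le_of_le {a b p p' z : Point} (hp : inBox a b p) (hp' : inBox a b p')
    (h : p ≤ z) (h' : z ≤ p') : inBox a b z :=
  ⟨hp.1.trans h, h'.trans hp'.2⟩

lemma IGAdj.symm {P : Inst} {u w : Point × Point} (h : IGAdj P u w) : IGAdj P w u :=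
  let ⟨hne, p, q, he, h₁, h₂, h₃, h₄⟩ := h
  ⟨hne.symm, p, q, he, h₃, h₄, h₁, h₂⟩

lemma IGAdj.exists_inBox {P : Inst} {l h : Point} {w : Point × Point} (hlh : l ≤ h)
    (hw : IGAdj P (l, h) w) : ∃ p, l ≤ p ∧ p ≤ h ∧ inBox w.1 w.2 p :=
  let ⟨_, p, _, _, hp, _, hp', _⟩ := hw
  ⟨p, ((inBox_iff_of_le hlh p).1 hp).1, ((inBox_iff_of_le hlh p).1 hp).2, hp'⟩

lemma IGAdj.fst_ne_snd {P : Inst} {p q : Point} {w : Point × Point} (hw : IGAdj P (p, q) w) :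
    p ≠ q := by
  rintro rfl
  obtain ⟨-, e, e', he, h, h', -⟩ := hw
  have h := (inBox_iff_of_le le_rfl e).1 h
  have h' := (inBox_iff_of_le le_rfl e').1 h'
  exact he.2.2.1 ((le_antisymm h.2 h.1).trans (le_antisymm h'.2 h'.1).symm)

lemma IGAdj.of_subbox {P : Inst} {v w : Point × Point} {l h : Point} (hl : v.1 ≤ l)
    (hlh : l ≤ h) (hh : h ≤ v.2) (hw : IGAdj P (l, h) w) (hwv : w ≠ v) : IGAdj P v w := by
  obtain ⟨-, p, q, he, hp, hq, hp', hq'⟩ := hw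
  have hsub : ∀ z, inBox l h z → inBox v.1 v.2 z := fun z hz =>
    (inBox_iff_of_le (hl.trans (hlh.trans hh)) z).2
      ⟨hl.trans ((inBox_iff_of_le hlh z).1 hz).1, ((inBox_iff_of_le hlh z).1 hz).2.trans hh⟩
  exact ⟨hwv.symm, p, q, he, hsub p hp, hsub q hq, hp', hq'⟩

lemma not_igAdj_of_le {P : Inst} {l₁ h₁ l₂ h₂ : Point} (hlh₁ : l₁ ≤ h₁) (h₁l₂ : h₁ ≤ l₂)
    (hlh₂ : l₂ ≤ h₂) : ¬ IGAdj P (l₁, h₁) (l₂, h₂) := by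
  rintro ⟨-, p, q, he, hp, hq, hp', hq'⟩
  have hp₁ := ((inBox_iff_of_le hlh₁ p).1 hp).2
  have hq₁ := ((inBox_iff_of_le hlh₁ q).1 hq).2
  have hp₂ := ((inBox_iff_of_le hlh₂ p).1 hp').1
  have hq₂ := ((inBox_iff_of_le hlh₂ q).1 hq').1
  exact he.2.2.1 ((le_antisymm hp₁ (h₁l₂.trans hp₂)).trans (le_antisymm hq₁ (h₁l₂.trans hq₂)).symm)

lemma IGAdj.inBox_of_forall_hananV {P : Inst} {p q : Point} {w : Point × Point}
    (hseg : ∀ z ∈ hananV P, inBox p q z → z = p ∨ z = q) (hw : IGAdj P (p, q) w) :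
    inBox w.1 w.2 p ∧ inBox w.1 w.2 q := by
  obtain ⟨-, e, e', he, h, h', hw, hw'⟩ := hw
  rcases hseg e he.1 h with rfl | rfl <;> rcases hseg e' he.2.1 h' with rfl | rfl
  exacts [absurd rfl he.2.2.1, ⟨hw, hw'⟩, ⟨hw', hw⟩, absurd rfl he.2.2.1]

lemma IGAdj.of_forall_hananV {P : Inst} {p q : Point} {w w' : Point × Point}
    (hseg : ∀ z ∈ hananV P, inBox p q z → z = p ∨ z = q) (hw : IGAdj P (p, q) w)
    (hw' : IGAdj P (p, q) w') (hne : w ≠ w') : IGAdj P w w' := by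
  have hpq := hw'.inBox_of_forall_hananV hseg
  obtain ⟨-, e, e', he, h, h', hew, hew'⟩ := hw
  have hmem : ∀ z ∈ hananV P, inBox p q z → inBox w'.1 w'.2 z := fun z hz h => by
    rcases hseg z hz h with rfl | rfl
    exacts [hpq.1, hpq.2]
  exact ⟨hne, e, e', he, hew, hew', hmem e he.1 h, hmem e' he.2.1 h'⟩

lemma inBox_of_igAdj_of_igAdj {P : Inst} {l m m' h z : Point} {w : Point × Point} (hlm : l ≤ m)
    (hmh : m' ≤ h) (hw : IGAdj P (l, m) w) (hw' : IGAdj P (m', h) w) (hmz : m ≤ z)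
    (hzm : z ≤ m') : inBox w.1 w.2 z :=
  let ⟨_, _, hp, hpw⟩ := hw.exists_inBox hlm
  let ⟨_, hp', _, hpw'⟩ := hw'.exists_inBox hmh
  inBox_of_le_of_le hpw hpw' (hp.trans hmz) (hzm.trans hp')

lemma mem_hananV {P : Inst} {p : Point} : p ∈ hananV P ↔
    (∃ w ∈ P, w.1.1 = p.1 ∨ w.2.1 = p.1) ∧ (∃ w ∈ P, w.1.2 = p.2 ∨ w.2.2 = p.2) := by
  simp only [hananV, Finset.mem_product, Finset.mem_union, Finset.mem_image, ← exists_or,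
    ← and_or_left]

lemma hananV_eq_of_terminals {P Q : Inst} (hQ : ∀ w ∈ Q, w.1 ∈ hananV P ∧ w.2 ∈ hananV P)
    (hP : ∀ w ∈ P, ∃ w₁ ∈ Q, ∃ w₂ ∈ Q, w₁.1 = w.1 ∧ w₂.2 = w.2) : hananV Q = hananV P := by
  ext p
  rw [mem_hananV, mem_hananV]
  constructor
  · rintro ⟨⟨w, hw, hx⟩, ⟨w', hw', hy⟩⟩
    refine ⟨?_, ?_⟩
    · rcases hx with hx | hx
      · exact hx ▸ (mem_hananV.1 (hQ w hw).1).1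
      · exact hx ▸ (mem_hananV.1 (hQ w hw).2).1
    · rcases hy with hy | hy
      · exact hy ▸ (mem_hananV.1 (hQ w' hw').1).2
      · exact hy ▸ (mem_hananV.1 (hQ w' hw').2).2
  · rintro ⟨⟨w, hw, hx⟩, ⟨w', hw', hy⟩⟩
    obtain ⟨w₁, hw₁, w₂, hw₂, h₁, h₂⟩ := hP w hw
    obtain ⟨w₁', hw₁', w₂', hw₂', h₁', h₂'⟩ := hP w' hw'
    refine ⟨?_, ?_⟩
    · rcases hx with hx | hx
      · exact ⟨w₁, hw₁, .inl (by rw [h₁, hx])⟩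
      · exact ⟨w₂, hw₂, .inr (by rw [h₂, hx])⟩
    · rcases hy with hy | hy
      · exact ⟨w₁', hw₁', .inl (by rw [h₁', hy])⟩
      · exact ⟨w₂', hw₂', .inr (by rw [h₂', hy])⟩

lemma igAdj_eq_of_hananV_eq {P Q : Inst} (h : hananV Q = hananV P) : IGAdj Q = IGAdj P := by
  unfold IGAdj IsHananEdge
  rw [h]

/-- The chain `s_v ≤ q⁻ ≤ q ≤ q⁺ ≤ t_v` cuts `B(v)` along the Hanan edges `q⁻q` and `qq⁺`
(with `q⁻ = q` only at `s_v`); `q⁻` lies left of `B(u₂)`, `q` below the upper right corner of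
`B(u₁)`, and `q⁺` to the right of `B(u₁)` or above `B(u₁)` or `B(u₂)`. -/
structure IsSplit (P : Inst) (v u₁ u₂ : Point × Point) (qm q qp : Point) : Prop where
  le_qm : v.1 ≤ qm
  qm_le_q : qm ≤ q
  q_le_qp : q ≤ qp
  qp_le : qp ≤ v.2
  eq_of_qm_eq_q : qm = q → q = v.1
  isHananEdge_qm_q : qm ≠ q → IsHananEdge P qm q
  isHananEdge_q_qp : IsHananEdge P q qp
  qm_lt_u₂ : qm.1 < (u₂.1 ⊓ u₂.2).1
  q_le_u₁ : q ≤ u₁.1 ⊔ u₁.2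
  u_lt_qp : (u₁.1 ⊔ u₁.2).1 < qp.1 ∨ (u₁.1 ⊔ u₁.2).2 < qp.2 ∨ (u₂.1 ⊔ u₂.2).2 < qp.2

namespace IsSplit

variable {P : Inst} {v u₁ u₂ : Point × Point} {qm q qp : Point}

lemma hananV_eq (hs : IsSplit P v u₁ u₂ qm q qp) (hv : v ∈ P) :
    hananV ((P.erase v) ∪ {(v.1, qm), (qm, q), (q, qp), (qp, v.2)}) = hananV P := by
  have hq : q ∈ hananV P := hs.isHananEdge_q_qp.1
  have hqp : qp ∈ hananV P := hs.isHananEdge_q_qp.2.1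
  have hqm : qm ∈ hananV P := by
    by_cases h : qm = q
    · exact h ▸ hq
    · exact (hs.isHananEdge_qm_q h).1
  have hterm : ∀ w ∈ P, w.1 ∈ hananV P ∧ w.2 ∈ hananV P := fun w hw => by
    simp only [mem_hananV]
    exact ⟨⟨⟨w, hw, .inl rfl⟩, ⟨w, hw, .inl rfl⟩⟩, ⟨⟨w, hw, .inr rfl⟩, ⟨w, hw, .inr rfl⟩⟩⟩
  refine hananV_eq_of_terminals (fun w hw => ?_) (fun w hw => ?_)
  · simp only [Finset.mem_union, Finset.mem_erase, Finset.mem_insert,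
      Finset.mem_singleton] at hw
    rcases hw with ⟨-, hw⟩ | rfl | rfl | rfl | rfl
    exacts [hterm w hw, ⟨(hterm v hv).1, hqm⟩, ⟨hqm, hq⟩, ⟨hq, hqp⟩, ⟨hqp, (hterm v hv).2⟩]
  · by_cases hwv : w = v
    · subst hwv
      exact ⟨(w.1, qm), by simp, (qp, w.2), by simp, rfl, rfl⟩
    · exact ⟨w, by simp [hwv, hw], w, by simp [hwv, hw], rfl, rfl⟩

lemma igAdj_of_mem (hs : IsSplit P v u₁ u₂ qm q qp) {z w : Point × Point}
    (hz : z ∈ ({(v.1, qm), (qm, q), (q, qp), (qp, v.2)} : Finset (Point × Point)))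
    (hzw : IGAdj P z w) (hwv : w ≠ v) : IGAdj P v w := by
  have h₁ := hs.le_qm; have h₂ := hs.qm_le_q; have h₃ := hs.q_le_qp; have h₄ := hs.qp_le
  simp only [Finset.mem_insert, Finset.mem_singleton] at hz
  rcases hz with rfl | rfl | rfl | rfl
  · exact hzw.of_subbox le_rfl h₁ (h₂.trans (h₃.trans h₄)) hwv
  · exact hzw.of_subbox h₁ h₂ (h₃.trans h₄) hwv
  · exact hzw.of_subbox (h₁.trans h₂) h₃ h₄ hwv
  · exact hzw.of_subbox ((h₁.trans h₂).trans h₃) h₄ le_rfl hwv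

lemma not_igAdj_of_mem (hs : IsSplit P v u₁ u₂ qm q qp) {z z' : Point × Point}
    (hz : z ∈ ({(v.1, qm), (qm, q), (q, qp), (qp, v.2)} : Finset (Point × Point)))
    (hz' : z' ∈ ({(v.1, qm), (qm, q), (q, qp), (qp, v.2)} : Finset (Point × Point))) :
    ¬ IGAdj P z z' := by
  have h₁ := hs.le_qm; have h₂ := hs.qm_le_q; have h₃ := hs.q_le_qp; have h₄ := hs.qp_le
  have := h₂.trans h₃; have := h₃.trans h₄; have := h₂.trans (h₃.trans h₄)
  simp only [Finset.mem_insert, Finset.mem_singleton] at hz hz'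
  rcases hz with rfl | rfl | rfl | rfl <;> rcases hz' with rfl | rfl | rfl | rfl <;>
    first
    | exact fun h => h.1 rfl
    | exact not_igAdj_of_le ‹_› (by first | assumption | exact le_rfl) ‹_›
    | exact fun h => not_igAdj_of_le ‹_› (by first | assumption | exact le_rfl) ‹_› h.symm

lemma forall_hananV_qm_q (hs : IsSplit P v u₁ u₂ qm q qp) :
    ∀ z ∈ hananV P, inBox qm q z → z = qm ∨ z = q := by
  by_cases h : qm = q
  · subst h
    exact fun z _ hz => .inl (le_antisymm ((inBox_iff_of_le le_rfl z).1 hz).2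
      ((inBox_iff_of_le le_rfl z).1 hz).1)
  · exact (hs.isHananEdge_qm_q h).2.2.2.2

lemma inBox_of_igAdj_first_last (hs : IsSplit P v u₁ u₂ qm q qp) {w : Point × Point}
    (hw₁ : IGAdj P (v.1, qm) w) (hw₄ : IGAdj P (qp, v.2) w) {z : Point} (hz : qm ≤ z)
    (hz' : z ≤ qp) : inBox w.1 w.2 z :=
  inBox_of_igAdj_of_igAdj hs.le_qm hs.qp_le hw₁ hw₄ hz hz'

lemma igAdj_of_igAdj_first_last (hs : IsSplit P v u₁ u₂ qm q qp) {w w' : Point × Point}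
    (hw₁ : IGAdj P (v.1, qm) w) (hw₄ : IGAdj P (qp, v.2) w) (hw₁' : IGAdj P (v.1, qm) w')
    (hw₄' : IGAdj P (qp, v.2) w') (hne : w ≠ w') : IGAdj P w w' :=
  ⟨hne, q, qp, hs.isHananEdge_q_qp, hs.inBox_of_igAdj_first_last hw₁ hw₄ hs.qm_le_q hs.q_le_qp,
    hs.inBox_of_igAdj_first_last hw₁ hw₄ (hs.qm_le_q.trans hs.q_le_qp) le_rfl,
    hs.inBox_of_igAdj_first_last hw₁' hw₄' hs.qm_le_q hs.q_le_qp,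
    hs.inBox_of_igAdj_first_last hw₁' hw₄' (hs.qm_le_q.trans hs.q_le_qp) le_rfl⟩

lemma igAdj_u₁_of_igAdj_first_last (hs : IsSplit P v u₁ u₂ qm q qp)
    (hu₁ : IGAdj P (v.1, qm) u₁) {w : Point × Point} (hw₁ : IGAdj P (v.1, qm) w)
    (hw₄ : IGAdj P (qp, v.2) w) (hne : w ≠ u₁) : IGAdj P w u₁ := by
  have hqm : qm ≠ q := fun h => hu₁.fst_ne_snd (h.trans (hs.eq_of_qm_eq_q h)).symm
  obtain ⟨p, -, hp, hpu⟩ := hu₁.exists_inBox hs.le_qm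
  exact ⟨hne, qm, q, hs.isHananEdge_qm_q hqm,
    hs.inBox_of_igAdj_first_last hw₁ hw₄ le_rfl (hs.qm_le_q.trans hs.q_le_qp),
    hs.inBox_of_igAdj_first_last hw₁ hw₄ hs.qm_le_q hs.q_le_qp,
    inBox_of_le_of_le hpu (inBox_sup _ _) hp (hs.qm_le_q.trans hs.q_le_u₁),
    inBox_of_le_of_le hpu (inBox_sup _ _) (hp.trans hs.qm_le_q) hs.q_le_u₁⟩

lemma not_igAdj_first_u₂ (hs : IsSplit P v u₁ u₂ qm q qp) : ¬ IGAdj P (v.1, qm) u₂ := fun h => by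
  obtain ⟨p, -, hp, hpu⟩ := h.exists_inBox hs.le_qm
  linarith [hpu.1.1, hp.1, hs.qm_lt_u₂]

lemma not_igAdj_last_u₁_or_u₂ (hs : IsSplit P v u₁ u₂ qm q qp) :
    ¬ IGAdj P (qp, v.2) u₁ ∨ ¬ IGAdj P (qp, v.2) u₂ := by
  have hbox {u : Point × Point} (hu : IGAdj P (qp, v.2) u) : qp ≤ u.1 ⊔ u.2 :=
    let ⟨_, hp, _, hpu⟩ := hu.exists_inBox hs.qp_le
    hp.trans hpu.2
  rcases hs.u_lt_qp with h | h | h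
  · exact .inl fun hu => (hbox hu).1.not_gt h
  · exact .inl fun hu => (hbox hu).2.not_gt h
  · exact .inr fun hu => (hbox hu).2.not_gt h

end IsSplit

/-- The adjacency of `IG[P]` on all pairs of points, so that `IG[Q]` is an induced subgraph
whenever `Q` has the same Hanan grid as `P`. -/
def igGraph (P : Inst) : SimpleGraph (Point × Point) where
  Adj := IGAdj P
  symm := ⟨fun _ _ => IGAdj.symm⟩
  loopless := ⟨fun _ h => h.1 rfl⟩

theorem isAcyclic_induce_of_isSplit {P : Inst} {v u₁ u₂ : Point × Point} {qm q qp : Point}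
    (hs : IsSplit P v u₁ u₂ qm q qp) (hu₁ : u₁ ∈ P.erase v) (hvu₁ : IGAdj P v u₁)
    (hO : ((igGraph P).induce ↑(P.erase v)).IsAcyclic)
    (hcyc : ∀ a b : ↑(P.erase v), IGAdj P v a → IGAdj P v b →
      ((igGraph P).induce ↑(P.erase v)).Reachable a b → a = b ∨ s(a.1, b.1) = s(u₁, u₂))
    (htri : ∀ a ∈ P.erase v, ∀ b ∈ P.erase v, IGAdj P v a → IGAdj P v b → ¬ IGAdj P a b) :
    ((igGraph P).induce (insert (q, qp) (insert (qm, q)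
      (insert (qp, v.2) (insert (v.1, qm) ↑(P.erase v)))))).IsAcyclic := by
  set N : Finset (Point × Point) := {(v.1, qm), (qm, q), (q, qp), (qp, v.2)}
  have hN : ∀ z ∈ N, ∀ a ∈ P.erase v, IGAdj P z a → IGAdj P v a :=
    fun z hz a ha h => hs.igAdj_of_mem hz h (Finset.mem_erase.1 ha).1
  have h₁N : (v.1, qm) ∈ N := by simp [N]
  have h₄N : (qp, v.2) ∈ N := by simp [N]
  have h14 := isAcyclic_induce_insert_insert hO hcyc (hN _ h₁N) (hN _ h₄N)
    (hs.not_igAdj_of_mem h₁N h₄N) hs.not_igAdj_first_u₂ hs.not_igAdj_last_u₁_or_u₂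
    (fun a ha b hb h₁ h₄ h₁' h₄' => by_contra fun hab => htri a ha b hb (hN _ h₁N a ha h₁)
      (hN _ h₁N b hb h₁') (hs.igAdj_of_igAdj_first_last h₁ h₄ h₁' h₄' hab))
    (fun hu a ha h₁ h₄ => by_contra fun hau => htri a ha u₁ hu₁ (hN _ h₁N a ha h₁) hvu₁
      (hs.igAdj_u₁_of_igAdj_first_last hu h₁ h₄ hau))
  have hleaf : ∀ z ∈ N, (∀ w w', IGAdj P z w → IGAdj P z w' → w ≠ w' → IGAdj P w w') →
      ∀ {s : Set (Point × Point)}, s ⊆ ↑(P.erase v ∪ N) →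
        ((igGraph P).induce s).IsAcyclic → ((igGraph P).induce (insert z s)).IsAcyclic := by
    intro z hz hclique s hsub hs'
    refine isAcyclic_induce_insert hs' fun a b ha hb _ => Subtype.ext (by_contra fun hab => ?_)
    have hold : ∀ c : s, IGAdj P z c → c.1 ∈ P.erase v := fun c hc =>
      (Finset.mem_union.1 (hsub c.2)).resolve_right fun h => hs.not_igAdj_of_mem hz h hc
    exact htri a (hold a ha) b (hold b hb) (hN z hz a (hold a ha) ha)
      (hN z hz b (hold b hb) hb) (hclique a b ha hb hab)
  have hsub : ∀ z ∈ N, z ∈ (↑(P.erase v ∪ N) : Set _) :=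
    fun z hz => Finset.mem_coe.2 (Finset.mem_union_right _ hz)
  have hsubO : ((P.erase v : Finset _) : Set (Point × Point)) ⊆ ↑(P.erase v ∪ N) :=
    Finset.coe_subset.2 Finset.subset_union_left
  have h2N : (qm, q) ∈ N := by simp [N]
  refine hleaf (q, qp) (by simp [N]) (fun _ _ => IGAdj.of_forall_hananV
    hs.isHananEdge_q_qp.2.2.2.2) (Set.insert_subset (hsub _ h2N) (Set.insert_subset
      (hsub _ h₄N) (Set.insert_subset (hsub _ h₁N) hsubO))) ?_
  exact hleaf (qm, q) h2N (fun _ _ => IGAdj.of_forall_hananV hs.forall_hananV_qm_q)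
    (Set.insert_subset (hsub _ h₄N) (Set.insert_subset (hsub _ h₁N) hsubO)) h14

theorem isAcyclic_ig_of_isSplit (P : Inst) (hconn : (IG P).Connected)
    (htf : (IG P).CliqueFree 3) (hcard : (IG P).edgeSet.ncard = P.card)
    {v u₁ u₂ : Point × Point} (hvP : v ∈ P) (hu₁P : u₁ ∈ P) (hu₂P : u₂ ∈ P) (hu : u₁ ≠ u₂)
    (hvu₁ : IGAdj P v u₁) (hvu₂ : IGAdj P v u₂)
    (hcyc : ((IG P).deleteIncidenceSet ⟨v, hvP⟩).Reachable ⟨u₁, hu₁P⟩ ⟨u₂, hu₂P⟩)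
    {qm q qp : Point} (hs : IsSplit P v u₁ u₂ qm q qp) :
    (IG ((P.erase v) ∪ {(v.1, qm), (qm, q), (q, qp), (qp, v.2)})).IsAcyclic := by
  let f : (igGraph P).induce ↑(P.erase v) →g (IG P).deleteIncidenceSet ⟨v, hvP⟩ :=
    ⟨fun a => ⟨a.1, Finset.mem_of_mem_erase a.2⟩, fun {a b} h => deleteIncidenceSet_adj.2
      ⟨h, fun e => (Finset.mem_erase.1 a.2).1 (congrArg Subtype.val e),
        fun e => (Finset.mem_erase.1 b.2).1 (congrArg Subtype.val e)⟩⟩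
  have hf : Function.Injective f := fun a b h => Subtype.ext (by simpa [f] using h)
  have hcard' : (IG P).edgeSet.ncard = Nat.card {x // x ∈ P} := by simpa using hcard
  have h₁ : (IG P).Adj ⟨v, hvP⟩ ⟨u₁, hu₁P⟩ := hvu₁
  have h₂ : (IG P).Adj ⟨v, hvP⟩ ⟨u₂, hu₂P⟩ := hvu₂
  have hne : (⟨u₁, hu₁P⟩ : {x // x ∈ P}) ≠ ⟨u₂, hu₂P⟩ := fun e => hu (congrArg Subtype.val e)
  have hsplit := isAcyclic_induce_of_isSplit hs (Finset.mem_erase.2 ⟨hvu₁.1.symm, hu₁P⟩) hvu₁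
    ((isAcyclic_deleteIncidenceSet_of_reachable hconn hcard' h₁ h₂ hne hcyc).comap f hf)
    (fun a b ha hb h => (eq_or_sym2_eq_of_reachable_deleteIncidenceSet hconn hcard' h₁ h₂ hne
      hcyc (a := f a) (b := f b) ha hb (h.map f)).imp (fun e => hf e)
      (fun e => by simpa [f] using congrArg (Sym2.map Subtype.val) e))
    (fun a ha b hb hva hvb hab => htf _ ((is3Clique_triple_iff (G := IG P) (a := ⟨v, hvP⟩)
      (b := ⟨a, Finset.mem_of_mem_erase ha⟩) (c := ⟨b, Finset.mem_of_mem_erase hb⟩)).2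
        ⟨hva, hvb, hab⟩))
  have hmem : ∀ a ∈ (P.erase v) ∪ {(v.1, qm), (qm, q), (q, qp), (qp, v.2)},
      a ∈ (insert (q, qp) (insert (qm, q) (insert (qp, v.2) (insert (v.1, qm)
        (P.erase v : Set (Point × Point))))) : Set (Point × Point)) := by
    intro a ha
    simp only [Finset.mem_union, Finset.mem_insert, Finset.mem_singleton] at ha
    simp only [Set.mem_insert_iff, Finset.mem_coe]
    tauto
  have hadj := igAdj_eq_of_hananV_eq (hs.hananV_eq hvP)
  let g : IG ((P.erase v) ∪ {(v.1, qm), (qm, q), (q, qp), (qp, v.2)}) →g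
      (igGraph P).induce (insert (q, qp) (insert (qm, q) (insert (qp, v.2)
        (insert (v.1, qm) ↑(P.erase v))))) :=
    ⟨fun a => ⟨a.1, hmem a.1 a.2⟩, fun {a b} h => (congrFun (congrFun hadj a.1) b.1).mp h⟩
  exact hsplit.comap g fun a b h => Subtype.ext (by have := Subtype.ext_iff.1 h; exact this)

/-- `H(P, v)` is the `a × b` grid `p_{i,j} = (X j, Y i)`, indexed from `0`. -/
structure IsGrid (P : Inst) (v : Point × Point) (a b : ℕ) (X Y : ℕ → ℝ) : Prop where
  strictMonoOn_X : StrictMonoOn X (Set.Iio b)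
  strictMonoOn_Y : StrictMonoOn Y (Set.Iio a)
  mem_iff : ∀ z : Point, (z ∈ hananV P ∧ inBox v.1 v.2 z) ↔ ∃ i < a, ∃ j < b, z = (X j, Y i)

namespace IsGrid

variable {P : Inst} {v : Point × Point} {a b : ℕ} {X Y : ℕ → ℝ}

lemma X_le_iff (hG : IsGrid P v a b X Y) {j j' : ℕ} (hj : j < b) (hj' : j' < b) :
    X j ≤ X j' ↔ j ≤ j' :=
  hG.strictMonoOn_X.le_iff_le hj hj'

lemma Y_le_iff (hG : IsGrid P v a b X Y) {i i' : ℕ} (hi : i < a) (hi' : i' < a) :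
    Y i ≤ Y i' ↔ i ≤ i' :=
  hG.strictMonoOn_Y.le_iff_le hi hi'

lemma le (hG : IsGrid P v a b X Y) {i j i' j' : ℕ} (hi : i ≤ i') (hj : j ≤ j') (hi' : i' < a)
    (hj' : j' < b) : ((X j, Y i) : Point) ≤ (X j', Y i') :=
  ⟨(hG.X_le_iff (by omega) hj').2 hj, (hG.Y_le_iff (by omega) hi').2 hi⟩

lemma mem (hG : IsGrid P v a b X Y) (hv : v.1 ≤ v.2) {i j : ℕ} (hi : i < a) (hj : j < b) :
    (X j, Y i) ∈ hananV P ∧ v.1 ≤ (X j, Y i) ∧ (X j, Y i) ≤ v.2 :=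
  let ⟨h, hbox⟩ := (hG.mem_iff _).2 ⟨i, hi, j, hj, rfl⟩
  ⟨h, (inBox_iff_of_le hv _).1 hbox⟩

lemma isHananEdge (hG : IsGrid P v a b X Y) (hv : v.1 ≤ v.2) {i j i' j' : ℕ} (hi' : i' < a)
    (hj' : j' < b) (hstep : (i' = i ∧ j' = j + 1) ∨ (j' = j ∧ i' = i + 1)) :
    IsHananEdge P (X j, Y i) (X j', Y i') := by
  have hi : i < a := by omega
  have hj : j < b := by omega
  have hle : ((X j, Y i) : Point) ≤ (X j', Y i') := hG.le (by omega) (by omega) hi' hj'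
  refine ⟨(hG.mem hv hi hj).1, (hG.mem hv hi' hj').1, fun h => ?_, ?_, fun z hz hzb => ?_⟩
  · have hX := (hG.X_le_iff hj' hj).1 (congrArg Prod.fst h).ge
    have hY := (hG.Y_le_iff hi' hi).1 (congrArg Prod.snd h).ge
    omega
  · rcases hstep with ⟨rfl, -⟩ | ⟨rfl, -⟩
    exacts [.inr rfl, .inl rfl]
  · rw [inBox_iff_of_le hle] at hzb
    obtain ⟨i'', hi'', j'', hj'', rfl⟩ := (hG.mem_iff z).1 ⟨hz, (inBox_iff_of_le hv z).2
      ⟨(hG.mem hv hi hj).2.1.trans hzb.1, hzb.2.trans (hG.mem hv hi' hj').2.2⟩⟩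
    have h₁ := (hG.X_le_iff hj hj'').1 hzb.1.1
    have h₂ := (hG.X_le_iff hj'' hj').1 hzb.2.1
    have h₃ := (hG.Y_le_iff hi hi'').1 hzb.1.2
    have h₄ := (hG.Y_le_iff hi'' hi').1 hzb.2.2
    rcases (by omega : (i'' = i ∧ j'' = j) ∨ (i'' = i' ∧ j'' = j')) with ⟨rfl, rfl⟩ | ⟨rfl, rfl⟩
    exacts [.inl rfl, .inr rfl]

lemma isSplit (hG : IsGrid P v a b X Y) (hv : v.1 ≤ v.2) (hs : (X 0, Y 0) = v.1)
    {u₁ u₂ : Point × Point} {α β : ℕ} (hαa : α < a) (hβb : β < b)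
    (hβ : X β = min (u₁.1 ⊔ u₁.2).1 v.2.1)
    (hα : Y α = min (min (u₁.1 ⊔ u₁.2).2 v.2.2) (min (u₂.1 ⊔ u₂.2).2 v.2.2))
    (hβu₂ : X β < (u₂.1 ⊓ u₂.2).1) {qm : Point} {i₀ j₀ i₁ j₁ : ℕ} (hi₀ : i₀ ≤ α) (hj₀ : j₀ ≤ β)
    (hi₁ : i₁ < a) (hj₁ : j₁ < b)
    (hstep : (i₁ = i₀ ∧ j₁ = j₀ + 1 ∧ j₀ = β) ∨ (j₁ = j₀ ∧ i₁ = i₀ + 1 ∧ i₀ = α))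
    (hqm : (i₀ = 0 ∧ j₀ = 0 ∧ qm = (X j₀, Y i₀)) ∨
      ∃ i j, ((i₀ = i ∧ j₀ = j + 1) ∨ (j₀ = j ∧ i₀ = i + 1)) ∧ qm = (X j, Y i)) :
    IsSplit P v u₁ u₂ qm (X j₀, Y i₀) (X j₁, Y i₁) := by
  have hi₀a : i₀ < a := by omega
  have hj₀b : j₀ < b := by omega
  obtain ⟨hqm₁, hqm₂, hqm₃, hqm₄, hqm₅⟩ : v.1 ≤ qm ∧ qm ≤ (X j₀, Y i₀) ∧ qm.1 ≤ X β ∧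
      (qm = (X j₀, Y i₀) → (X j₀, Y i₀) = v.1) ∧
      (qm ≠ (X j₀, Y i₀) → IsHananEdge P qm (X j₀, Y i₀)) := by
    rcases hqm with ⟨rfl, rfl, rfl⟩ | ⟨i, j, hst, rfl⟩
    · exact ⟨hs.ge, le_rfl, (hG.X_le_iff (by omega) hβb).2 hj₀, fun _ => hs, fun h => absurd rfl h⟩
    · have he := hG.isHananEdge hv hi₀a hj₀b hst
      exact ⟨(hG.mem hv (by omega) (by omega)).2.1, hG.le (by omega) (by omega) hi₀a hj₀b,
        (hG.X_le_iff (by omega) hβb).2 (by omega), fun h => absurd h he.2.2.1, fun _ => he⟩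
  have hqp := (hG.mem hv hi₁ hj₁).2.2
  refine ⟨hqm₁, hqm₂, hG.le (by omega) (by omega) hi₁ hj₁, hqp, hqm₄, hqm₅,
    hG.isHananEdge hv hi₁ hj₁ (hstep.imp (fun h => ⟨h.1, h.2.1⟩) (fun h => ⟨h.1, h.2.1⟩)),
    hqm₃.trans_lt hβu₂, ⟨?_, ?_⟩, ?_⟩
  · exact ((hG.X_le_iff hj₀b hβb).2 hj₀).trans (hβ ▸ min_le_left _ _)
  · exact ((hG.Y_le_iff hi₀a hαa).2 hi₀).trans (hα ▸ (min_le_left _ _).trans (min_le_left _ _))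
  · rcases hstep with ⟨rfl, rfl, rfl⟩ | ⟨rfl, rfl, rfl⟩
    · have hlt : min (u₁.1 ⊔ u₁.2).1 v.2.1 < X (j₀ + 1) :=
        hβ ▸ hG.strictMonoOn_X hβb hj₁ (by omega)
      exact .inl ((min_lt_iff.1 hlt).resolve_right hqp.1.not_gt)
    · have hlt := hα ▸ hG.strictMonoOn_Y hαa hi₁ (by omega)
      simp only [min_lt_iff] at hlt
      rcases hlt with (h | h) | (h | h)
      exacts [.inr (.inl h), absurd hqp.2 h.not_ge, .inr (.inr h), absurd hqp.2 h.not_ge]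

lemma isSplit_of_form (hG : IsGrid P v a b X Y) (hv : v.1 ≤ v.2) (hs : (X 0, Y 0) = v.1)
    {u₁ u₂ : Point × Point} {α β : ℕ} (hαa : α < a) (hβb : β < b)
    (hβ : X β = min (u₁.1 ⊔ u₁.2).1 v.2.1)
    (hα : Y α = min (min (u₁.1 ⊔ u₁.2).2 v.2.2) (min (u₂.1 ⊔ u₂.2).2 v.2.2))
    (hβu₂ : X β < (u₂.1 ⊓ u₂.2).1) {qm q qp : Point}
    (hform :
      (∃ i ≤ α, β + 1 < b ∧ q = (X β, Y i) ∧ qp = (X (β + 1), Y i) ∧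
        ((i = 0 ∧ β = 0 ∧ qm = q) ∨
         (0 < β ∧ qm = (X (β - 1), Y i)) ∨
         (0 < i ∧ qm = (X β, Y (i - 1))))) ∨
      (∃ j ≤ β, α + 1 < a ∧ q = (X j, Y α) ∧ qp = (X j, Y (α + 1)) ∧
        ((α = 0 ∧ j = 0 ∧ qm = q) ∨
         (0 < α ∧ qm = (X j, Y (α - 1))) ∨
         (0 < j ∧ qm = (X (j - 1), Y α))))) :
    IsSplit P v u₁ u₂ qm q qp := by
  rcases hform with ⟨i, hi, hβ', rfl, rfl, hqm⟩ | ⟨j, hj, hα', rfl, rfl, hqm⟩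
  · refine hG.isSplit hv hs hαa hβb hβ hα hβu₂ hi le_rfl (by omega) hβ' (.inl ⟨rfl, rfl, rfl⟩) ?_
    rcases hqm with h | ⟨h, rfl⟩ | ⟨h, rfl⟩
    exacts [.inl h, .inr ⟨i, β - 1, .inl ⟨rfl, by omega⟩, rfl⟩,
      .inr ⟨i - 1, β, .inr ⟨rfl, by omega⟩, rfl⟩]
  · refine hG.isSplit hv hs hαa hβb hβ hα hβu₂ le_rfl hj hα' (by omega) (.inr ⟨rfl, rfl, rfl⟩) ?_
    rcases hqm with h | ⟨h, rfl⟩ | ⟨h, rfl⟩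
    exacts [.inl ⟨h.1, h.2⟩, .inr ⟨α - 1, j, .inr ⟨rfl, by omega⟩, rfl⟩,
      .inr ⟨α, j - 1, .inl ⟨rfl, by omega⟩, rfl⟩]

end IsGrid

theorem reachable_deleteIncidenceSet_of_cycle {P : Inst} {m : ℕ} (hm : 3 ≤ m)
    {c : ℕ → Point × Point} (hcP : ∀ i < m, c i ∈ P)
    (hcinj : ∀ i < m, ∀ j < m, c i = c j → i = j)
    (hccycle : ∀ i < m, IGAdj P (c i) (c ((i + 1) % m))) :
    ((IG P).deleteIncidenceSet ⟨c 0, hcP 0 (by omega)⟩).Reachable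
      ⟨c 1, hcP 1 (by omega)⟩ ⟨c (m - 1), hcP (m - 1) (by omega)⟩ := by
  have key : ∀ k (hk : k + 1 < m), ((IG P).deleteIncidenceSet ⟨c 0, hcP 0 (by omega)⟩).Reachable
      ⟨c 1, hcP 1 (by omega)⟩ ⟨c (k + 1), hcP (k + 1) hk⟩ := by
    intro k
    induction k with
    | zero => exact fun _ => .rfl
    | succ k ih =>
      intro hk
      have hadj := hccycle (k + 1) (by omega)
      rw [Nat.mod_eq_of_lt hk] at hadj
      refine (ih (by omega)).trans
        (Adj.reachable (deleteIncidenceSet_adj.2 ⟨hadj, fun e => ?_, fun e => ?_⟩))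
      · have := hcinj _ (by omega) 0 (by omega) (congrArg Subtype.val e)
        omega
      · have := hcinj _ hk 0 (by omega) (congrArg Subtype.val e)
        omega
  obtain ⟨k, rfl⟩ : ∃ k, m = k + 2 := ⟨m - 2, by omega⟩
  simpa using key k (by omega)

theorem modified_instance_is_forest_general
    (P : Inst)
    (hconn : (IG P).Connected)
    (htrianglefree : (IG P).CliqueFree 3)
    -- a connected graph contains exactly one cycle iff it has as many edges as vertices
    (hunicyclic : ((IG P).edgeSet).ncard = P.card)
    -- the cycle, of length at least four
    (m : ℕ) (hm : 4 ≤ m) (c : ℕ → Point × Point)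
    (hcP : ∀ i < m, c i ∈ P)
    (hcinj : ∀ i < m, ∀ j < m, c i = c j → i = j)
    (hccycle : ∀ i < m, IGAdj P (c i) (c ((i + 1) % m)))
    -- the chosen pair v on the cycle and its neighbors u₁, u₂ on the cycle
    (v u₁ u₂ : Point × Point)
    (hv : v = c 0) (hu₁ : u₁ = c 1) (hu₂ : u₂ = c (m - 1))
    (hvreg : v.1 ≤ v.2)
    -- H(P, v) is an a × b grid with vertices pᵢⱼ = (X j, Y i), p₀₀ = s_v (0-indexed)
    (a b : ℕ)
    (X Y : ℕ → ℝ)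
    (hX : StrictMonoOn X (Set.Iio b)) (hY : StrictMonoOn Y (Set.Iio a))
    (hgrid : ∀ z : Point,
      (z ∈ hananV P ∧ inBox v.1 v.2 z) ↔ ∃ i < a, ∃ j < b, z = (X j, Y i))
    (hs : (X 0, Y 0) = v.1)
    -- B(u₁) and B(u₂) are separated by a vertical line avoiding both, B(u₁) on the left
    (hsep : ∃ x₀ : ℝ, (u₁.1 ⊔ u₁.2).1 < x₀ ∧ x₀ < (u₂.1 ⊓ u₂.2).1)
    -- α and β: (X β, Y α) is determined by the right boundary of B(u₁) ∩ B(v) and the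
    -- lower of the upper boundaries of B(u₁) ∩ B(v) and B(u₂) ∩ B(v)
    (α β : ℕ) (hαa : α < a) (hβb : β < b)
    (hβ : X β = min (u₁.1 ⊔ u₁.2).1 v.2.1)
    (hα : Y α = min (min (u₁.1 ⊔ u₁.2).2 v.2.2) (min (u₂.1 ⊔ u₂.2).2 v.2.2))
    -- the chosen triple q⁻ ≤ q ≤ q⁺, of horizontal or vertical form
    (qm q qp : Point)
    (hform :
      (∃ i ≤ α, β + 1 < b ∧ q = (X β, Y i) ∧ qp = (X (β + 1), Y i) ∧
        ((i = 0 ∧ β = 0 ∧ qm = q) ∨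
         (0 < β ∧ qm = (X (β - 1), Y i)) ∨
         (0 < i ∧ qm = (X β, Y (i - 1))))) ∨
      (∃ j ≤ β, α + 1 < a ∧ q = (X j, Y α) ∧ qp = (X j, Y (α + 1)) ∧
        ((α = 0 ∧ j = 0 ∧ qm = q) ∨
         (0 < α ∧ qm = (X j, Y (α - 1))) ∨
         (0 < j ∧ qm = (X (j - 1), Y α)))))
    -- the modified instance P̃
    (Pt : Inst)
    (hPt : Pt = (P.erase v) ∪ {(v.1, qm), (qm, q), (q, qp), (qp, v.2)}) :
    (IG Pt).IsAcyclic := by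
  obtain ⟨x₀, hx₁, hx₂⟩ := hsep
  have hβu₂ : X β < (u₂.1 ⊓ u₂.2).1 := hβ ▸ (min_le_left _ _).trans_lt (hx₁.trans hx₂)
  have hsplit := IsGrid.isSplit_of_form ⟨hX, hY, hgrid⟩ hvreg hs hαa hβb hβ hα hβu₂ hform
  subst hPt hv hu₁ hu₂
  have hvu₂ := hccycle (m - 1) (by omega)
  rw [Nat.sub_add_cancel (by omega), Nat.mod_self] at hvu₂
  refine isAcyclic_ig_of_isSplit P hconn htrianglefree hunicyclic _ _ _
    (fun h => by have := hcinj 1 (by omega) (m - 1) (by omega) h; omega)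
    (by simpa [Nat.mod_eq_of_lt (by omega : 1 < m)] using hccycle 0 (by omega)) hvu₂.symm
    (reachable_deleteIncidenceSet_of_cycle (by omega) hcP hcinj hccycle) hsplit

/-- Claim 6.1: with the construction of Section 6 — `IG[P]` triangle-free, connected, with
exactly one cycle (of length `m ≥ 4`, with no degenerate pair on it); `v = (s_v, t_v)` a
regular nondegenerate pair on the cycle whose subgrid `H(P, v)` is an `a × b` grid with
vertices `p_{i,j} = (X j, Y i)`, `p_{0,0} = s_v`; `u₁, u₂` the neighbors of `v` on the cycle,
with `B(u₁)` and `B(u₂)` strictly separated by a vertical line, `B(u₁)` on the left; `α, β`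
determined by the boundaries of `B(u₁) ∩ B(v)` and `B(u₂) ∩ B(v)` with `p_{α,β} ≠ t_v`; and
a triple `q⁻ ≤ q ≤ q⁺` chosen from `𝓔^hor(p_{i,β})` for some `i ≤ α` or from
`𝓔^vert(p_{α,j})` for some `j ≤ β` — the intersection graph of the modified instance
`P̃ = (P \ {v}) ∪ {(s_v, q⁻), (q⁻, q), (q, q⁺), (q⁺, t_v)}` is a forest. -/
theorem modified_instance_is_forest
    (P : Inst)
    (hconn : (IG P).Connected)
    (htrianglefree : (IG P).CliqueFree 3)
    -- a connected graph contains exactly one cycle iff it has as many edges as vertices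
    (hunicyclic : ((IG P).edgeSet).ncard = P.card)
    -- the cycle, of length at least four
    (m : ℕ) (hm : 4 ≤ m) (c : ℕ → Point × Point)
    (hcP : ∀ i < m, c i ∈ P)
    (hcinj : ∀ i < m, ∀ j < m, c i = c j → i = j)
    (hccycle : ∀ i < m, IGAdj P (c i) (c ((i + 1) % m)))
    (hcnondeg : ∀ i < m, ¬ Degenerate (c i))
    -- the chosen pair v on the cycle and its neighbors u₁, u₂ on the cycle
    (v u₁ u₂ : Point × Point)
    (hv : v = c 0) (hu₁ : u₁ = c 1) (hu₂ : u₂ = c (m - 1))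
    (hvreg : v.1 ≤ v.2)
    -- H(P, v) is an a × b grid with vertices pᵢⱼ = (X j, Y i), p₀₀ = s_v (0-indexed)
    (a b : ℕ) (ha : 2 ≤ a) (hb : 2 ≤ b)
    (X Y : ℕ → ℝ)
    (hX : StrictMonoOn X (Set.Iio b)) (hY : StrictMonoOn Y (Set.Iio a))
    (hgrid : ∀ z : Point,
      (z ∈ hananV P ∧ inBox v.1 v.2 z) ↔ ∃ i < a, ∃ j < b, z = (X j, Y i))
    (hs : (X 0, Y 0) = v.1) (ht : (X (b - 1), Y (a - 1)) = v.2)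
    -- B(u₁) and B(u₂) are separated by a vertical line avoiding both, B(u₁) on the left
    (hsep : ∃ x₀ : ℝ, (u₁.1 ⊔ u₁.2).1 < x₀ ∧ x₀ < (u₂.1 ⊓ u₂.2).1)
    -- α and β: (X β, Y α) is determined by the right boundary of B(u₁) ∩ B(v) and the
    -- lower of the upper boundaries of B(u₁) ∩ B(v) and B(u₂) ∩ B(v)
    (α β : ℕ) (hαa : α < a) (hβb : β < b)
    (hβ : X β = min (u₁.1 ⊔ u₁.2).1 v.2.1)
    (hα : Y α = min (min (u₁.1 ⊔ u₁.2).2 v.2.2) (min (u₂.1 ⊔ u₂.2).2 v.2.2))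
    (hne : (X β, Y α) ≠ v.2)
    -- the chosen triple q⁻ ≤ q ≤ q⁺, of horizontal or vertical form
    (qm q qp : Point)
    (hform :
      (∃ i ≤ α, β + 1 < b ∧ q = (X β, Y i) ∧ qp = (X (β + 1), Y i) ∧
        ((i = 0 ∧ β = 0 ∧ qm = q) ∨
         (0 < β ∧ qm = (X (β - 1), Y i)) ∨
         (0 < i ∧ qm = (X β, Y (i - 1))))) ∨
      (∃ j ≤ β, α + 1 < a ∧ q = (X j, Y α) ∧ qp = (X j, Y (α + 1)) ∧
        ((α = 0 ∧ j = 0 ∧ qm = q) ∨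
         (0 < α ∧ qm = (X j, Y (α - 1))) ∨
         (0 < j ∧ qm = (X (j - 1), Y α)))))
    -- the modified instance P̃
    (Pt : Inst)
    (hPt : Pt = (P.erase v) ∪ {(v.1, qm), (qm, q), (q, qp), (qp, v.2)}) :
    (IG Pt).IsAcyclic :=
  modified_instance_is_forest_general P hconn htrianglefree hunicyclic m hm c hcP hcinj hccycle v u₁
    u₂ hv hu₁ hu₂ hvreg a b X Y hX hY hgrid hs hsep α β hαa hβb hβ hα qm q qp hform Pt hPt

end
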